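/- (Theorem 2.3) Let M_q(n) be the standard quantized matrix algebra over K with n ≥ 2 and q ≠ 0, and assume the ordered monomials {z^α : α ∈ ℕ^{I(n)}} form a K-basis of M_q(n). Then there exists a total order ≺ on ℕ^{I(n)} (namely the lexicographic order) such that: (1) ≺ is a well-order; (2) for all α, β, η, γ with γ ≠ 0, β ≠ γ, and γ = LE(z^α z^β z^η), one has β ≺ γ; (3) if α ≺ β then LE(z^γ z^α z^η) ≺ LE(z^γ z^β z^η); and (4) for every pair of generators z_{st}, z_{ij} with (s,t) < (i,j) there exist λ ∈ K \ {0} and f ∈ M_q(n) such that z_{st} z_{ij} = λ z_{ij} z_{st} + f with f = 0 or LE(f) ≺ ε_{ij} + ε_{st}. That is, M_q(n) is a solvable polynomial algebra. -/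

import Mathlib

/-! Common setup: the standard quantized matrix algebra `M_q(n)` of
Faddeev–Reshetikhin–Takhtajan, defined as the quotient of the free
`K`-algebra on the `n²` generators `z_{ij}` by the two-sided ideal
generated by the relations R1–R4. -/

/-- The generator `z_{ij}` of the free algebra on `Fin n × Fin n`. -/
noncomputable def freeGen (K : Type*) [Field K] (n : ℕ) (i j : Fin n) :
    FreeAlgebra K (Fin n × Fin n) :=
  FreeAlgebra.ι K (i, j)

/-- The defining relations R1–R4 of the standard quantized matrix algebra. -/
inductive QMRel (K : Type*) [Field K] (q : K) (n : ℕ) :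
    FreeAlgebra K (Fin n × Fin n) → FreeAlgebra K (Fin n × Fin n) → Prop
  | r1 (i j k : Fin n) (h : j < k) :
      QMRel K q n (freeGen K n i j * freeGen K n i k)
        (q • (freeGen K n i k * freeGen K n i j))
  | r2 (i j k : Fin n) (h : i < k) :
      QMRel K q n (freeGen K n i j * freeGen K n k j)
        (q • (freeGen K n k j * freeGen K n i j))
  | r3 (i j s t : Fin n) (h1 : i < s) (h2 : t < j) :
      QMRel K q n (freeGen K n i j * freeGen K n s t)
        (freeGen K n s t * freeGen K n i j)
  | r4 (i j s t : Fin n) (h1 : i < s) (h2 : j < t) :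
      QMRel K q n (freeGen K n i j * freeGen K n s t)
        (freeGen K n s t * freeGen K n i j +
          (q - q⁻¹) • (freeGen K n i t * freeGen K n s j))

/-- The standard quantized matrix algebra `M_q(n)`: the quotient of the free
algebra by the two-sided ideal generated by the relations R1–R4. -/
abbrev QuantumMatrix (K : Type*) [Field K] (q : K) (n : ℕ) :=
  RingQuot (QMRel K q n)

/-- The generator `z_{ij}` of `M_q(n)`. -/
noncomputable def Zgen (K : Type*) [Field K] (q : K) (n : ℕ) (i j : Fin n) :
    QuantumMatrix K q n :=
  RingQuot.mkAlgHom K (QMRel K q n) (freeGen K n i j)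

/-- The order on the index set `I(n)`: `(k,l) < (i,j)` iff `k < i`, or
`k = i` and `l < j`. -/
def idxLt {n : ℕ} (p r : Fin n × Fin n) : Prop :=
  p.1 < r.1 ∨ (p.1 = r.1 ∧ p.2 < r.2)

/-- The ordered monomial `z^α`: the product of the `z_{ij}^{α_{ij}}` taken
in decreasing order of the indices `(i,j)`, i.e.
`z_{nn}^{α_{nn}} z_{n,n-1}^{α_{n,n-1}} ⋯ z_{n1}^{α_{n1}} ⋯ z_{11}^{α_{11}}`. -/
noncomputable def zmon (K : Type*) [Field K] (q : K) {n : ℕ}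
    (α : Fin n × Fin n → ℕ) : QuantumMatrix K q n :=
  ((List.finRange n).reverse.flatMap fun i =>
    (List.finRange n).reverse.map fun j => Zgen K q n i j ^ α (i, j)).prod

/-- The lexicographic order on exponent vectors: `α ≺ β` iff `α` is smaller
than `β` at the largest index (w.r.t. the order on `I(n)`) at which they
differ. -/
def expLt {n : ℕ} (α β : Fin n × Fin n → ℕ) : Prop :=
  ∃ p : Fin n × Fin n, α p < β p ∧ ∀ r : Fin n × Fin n, idxLt p r → α r = β r

/-- The indicator exponent vector `ε_{ij}`. -/
def eps {n : ℕ} (i j : Fin n) : Fin n × Fin n → ℕ :=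
  fun p => if p = (i, j) then 1 else 0

/-- `γ` is the leading exponent of `f` with respect to the order `lt`,
relative to the PBW basis `b` indexed by exponent vectors:
`γ` occurs with nonzero coefficient in the expansion of `f` and every other
exponent occurring in `f` is `lt`-smaller than `γ`. -/
def IsLeadExpWrt {K : Type*} [Field K] {q : K} {n : ℕ}
    (lt : (Fin n × Fin n → ℕ) → (Fin n × Fin n → ℕ) → Prop)
    (b : Module.Basis (Fin n × Fin n → ℕ) K (QuantumMatrix K q n))
    (f : QuantumMatrix K q n) (γ : Fin n × Fin n → ℕ) : Prop :=
  b.repr f γ ≠ 0 ∧ ∀ δ, b.repr f δ ≠ 0 → δ = γ ∨ lt δ γ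

/-- `γ` is the leading exponent of `f` w.r.t. the lexicographic order. -/
def IsLeadExp {K : Type*} [Field K] {q : K} {n : ℕ}
    (b : Module.Basis (Fin n × Fin n → ℕ) K (QuantumMatrix K q n))
    (f : QuantumMatrix K q n) (γ : Fin n × Fin n → ℕ) : Prop :=
  IsLeadExpWrt expLt b f γ

/-!
The lexicographic order on exponents is a well-order because `I(n)` is finite. The heart of the
proof is that the leading exponent of a product `z_{p₁} ⋯ z_{pₖ}` of generators, taken in any
order, is `ε_{p₁} + ⋯ + ε_{pₖ}`. To see this, sort the word by swapping adjacent inversions: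
each of R1–R4 swaps two generators up to a nonzero scalar and, for R4 only, a correction term
`z_{sj} z_{it}` of strictly smaller exponent, so induction on the exponent and then on the
number of inversions applies. In particular `LE(z^α z^β z^η) = α + β + η`, from which (2) and
(3) follow, and (4) is the commutation rule itself.
-/

namespace QuantumMatrix

variable {n : ℕ}

section ExpOrder

theorem idxLt_iff_toLex_lt {p r : Fin n × Fin n} : idxLt p r ↔ toLex p < toLex r :=
  Prod.Lex.toLex_lt_toLex.symm

/-- `expLt` compares exponents at the largest index where they differ, so it is the
colexicographic order of `Mathlib`, for the lexicographic order on `I(n)`. -/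
def expColex : (Fin n × Fin n → ℕ) ≃ Colex (Fin n ×ₗ Fin n → ℕ) :=
  (toLex.arrowCongr (Equiv.refl ℕ)).trans toColex

theorem expLt_eq_preimage : @expLt n = expColex ⁻¹'o (· < ·) := by
  ext α β
  simp only [expLt, Order.Preimage, idxLt_iff_toLex_lt]
  exact ⟨fun ⟨p, hp, h⟩ => ⟨toLex p, fun r hr => h (ofLex r) hr, hp⟩,
    fun ⟨p, h, hp⟩ => ⟨ofLex p, hp, fun r hr => h (toLex r) hr⟩⟩

instance : IsWellOrder (Fin n × Fin n → ℕ) expLt := by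
  have : IsWellOrder (Colex (Fin n ×ₗ Fin n → ℕ)) (· < ·) :=
    { trichotomous := fun _ _ hab hba => le_antisymm (not_lt.1 hba) (not_lt.1 hab) }
  rw [expLt_eq_preimage]
  exact RelIso.IsWellOrder.preimage _ expColex

theorem expLt_of_lt {α β : Fin n × Fin n → ℕ} (h : α < β) : expLt α β := by
  rw [expLt_eq_preimage]
  exact Pi.toColex_strictMono h

theorem _root_.expLt.add_left {α β : Fin n × Fin n → ℕ} (h : expLt α β)
    (γ : Fin n × Fin n → ℕ) :
    expLt (γ + α) (γ + β) := by
  obtain ⟨p, hp, heq⟩ := h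
  exact ⟨p, by simpa using hp, fun r hr => by simp [heq r hr]⟩

theorem _root_.expLt.add_right {α β : Fin n × Fin n → ℕ} (h : expLt α β)
    (γ : Fin n × Fin n → ℕ) :
    expLt (α + γ) (β + γ) := by
  simpa only [add_comm _ γ] using h.add_left γ

theorem expLt_single_add_single {a c p r : Fin n × Fin n} (ha : toLex a < toLex r)
    (hc : toLex c < toLex r) (hp : toLex p < toLex r) :
    expLt (Pi.single a 1 + Pi.single c 1) (Pi.single r 1 + Pi.single p 1) := by
  have hne : ∀ {x y : Fin n × Fin n}, toLex x < toLex y → y ≠ x :=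
    fun h e => h.ne' (by rw [e])
  refine ⟨r, by simp [hne ha, hne hc, hne hp], fun x hx => ?_⟩
  rw [idxLt_iff_toLex_lt] at hx
  simp [hne (ha.trans hx), hne (hc.trans hx), hne (hp.trans hx), hne hx]

theorem eps_eq_single (i j : Fin n) : eps i j = Pi.single (i, j) 1 := by
  ext p
  simp [eps, Pi.single_apply]

end ExpOrder

section LeadExp

variable {K : Type*} [Field K] {q : K}
  {lt : (Fin n × Fin n → ℕ) → (Fin n × Fin n → ℕ) → Prop}
  {b : Module.Basis (Fin n × Fin n → ℕ) K (QuantumMatrix K q n)}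
  {f g : QuantumMatrix K q n} {γ γ' : Fin n × Fin n → ℕ}

theorem isLeadExpWrt_basis (γ : Fin n × Fin n → ℕ) : IsLeadExpWrt lt b (b γ) γ := by
  refine ⟨by simp, fun δ hδ => Or.inl ?_⟩
  by_contra h
  simp [Ne.symm h] at hδ

theorem _root_.IsLeadExpWrt.smul (hf : IsLeadExpWrt lt b f γ) {c : K} (hc : c ≠ 0) :
    IsLeadExpWrt lt b (c • f) γ :=
  ⟨by simpa [hc] using hf.1, fun δ hδ => hf.2 δ (by simp_all)⟩

theorem _root_.IsLeadExpWrt.lt_of_repr_ne_zero [IsTrans _ lt] (hg : IsLeadExpWrt lt b g γ')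
    (h : lt γ' γ) {δ : Fin n × Fin n → ℕ} (hδ : b.repr g δ ≠ 0) : lt δ γ := by
  rcases hg.2 δ hδ with rfl | hδ'
  exacts [h, _root_.trans hδ' h]

theorem _root_.IsLeadExpWrt.add_smul [IsStrictOrder _ lt] (hf : IsLeadExpWrt lt b f γ)
    (hg : IsLeadExpWrt lt b g γ') (h : lt γ' γ) (c : K) :
    IsLeadExpWrt lt b (f + c • g) γ := by
  have hlow : ∀ δ, c * b.repr g δ ≠ 0 → lt δ γ := fun δ hδ =>
    hg.lt_of_repr_ne_zero h (right_ne_zero_of_mul hδ)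
  have hγ : c * b.repr g γ = 0 := by_contra fun h' => irrefl γ (hlow γ h')
  refine ⟨by simpa [hγ] using hf.1, fun δ hδ => ?_⟩
  by_cases h0 : b.repr f δ = 0
  · exact Or.inr (hlow δ (by simpa [h0] using hδ))
  · exact hf.2 δ h0

theorem _root_.IsLeadExpWrt.unique [Std.Asymm lt] (h : IsLeadExpWrt lt b f γ)
    (h' : IsLeadExpWrt lt b f γ') : γ = γ' := by
  rcases h'.2 γ h.1 with he | hl
  · exact he
  rcases h.2 γ' h'.1 with he | hl'
  · exact he.symm
  · exact absurd hl' (asymm hl)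

end LeadExp

section Words

def wordExp (w : List (Fin n × Fin n)) : Fin n × Fin n → ℕ := fun p => w.count p

theorem wordExp_nil : wordExp ([] : List (Fin n × Fin n)) = 0 := rfl

theorem wordExp_cons (a : Fin n × Fin n) (w : List (Fin n × Fin n)) :
    wordExp (a :: w) = Pi.single a 1 + wordExp w := by
  ext p
  rcases eq_or_ne p a with rfl | h
  · simp [wordExp, add_comm]
  · simp [wordExp, h, Ne.symm h]

theorem wordExp_append (u v : List (Fin n × Fin n)) :
    wordExp (u ++ v) = wordExp u + wordExp v := by
  ext p
  simp [wordExp]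

theorem wordExp_swap (u v : List (Fin n × Fin n)) (a c : Fin n × Fin n) :
    wordExp (u ++ a :: c :: v) = wordExp (u ++ c :: a :: v) := by
  simp only [wordExp_append, wordExp_cons, add_left_comm]

def IsDescending (w : List (Fin n × Fin n)) : Prop :=
  w.Pairwise fun a b => toLex b ≤ toLex a

theorem exists_adjacent_lt_of_not_isDescending {w : List (Fin n × Fin n)}
    (hw : ¬ IsDescending w) : ∃ u v a c, w = u ++ a :: c :: v ∧ toLex a < toLex c := by
  have : IsTrans (Fin n × Fin n) fun a b => toLex b ≤ toLex a :=
    ⟨fun _ _ _ h h' => h'.trans h⟩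
  rw [IsDescending, ← List.isChain_iff_pairwise, List.isChain_iff_forall_rel_of_append_cons_cons]
    at hw
  simp only [not_forall, not_le] at hw
  obtain ⟨a, c, u, v, hw, hac⟩ := hw
  exact ⟨u, v, a, c, hw, hac⟩

def inversions : List (Fin n × Fin n) → ℕ
  | [] => 0
  | a :: w => w.countP (fun c => toLex a < toLex c) + inversions w

theorem inversions_swap_lt (u v : List (Fin n × Fin n)) {a c : Fin n × Fin n}
    (h : toLex a < toLex c) : inversions (u ++ c :: a :: v) < inversions (u ++ a :: c :: v) := by
  induction u with
  | nil =>
    simp only [List.nil_append, inversions, List.countP_cons_of_neg, List.countP_cons_of_pos,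
      decide_eq_true_eq, h, h.not_gt, not_false_eq_true]
    omega
  | cons d u ih =>
    simp only [List.cons_append, inversions, List.countP_append, List.countP_cons]
    omega

def descIdx (n : ℕ) : List (Fin n × Fin n) :=
  (List.finRange n).reverse.flatMap fun i => (List.finRange n).reverse.map fun j => (i, j)

theorem descIdx_pairwise : (descIdx n).Pairwise fun a b => toLex b < toLex a := by
  rw [descIdx, List.pairwise_flatMap, List.pairwise_reverse]
  refine ⟨fun i _ => ?_, (List.pairwise_lt_finRange n).imp fun hi x hx y hy => ?_⟩
  · rw [List.pairwise_map, List.pairwise_reverse]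
    simpa [Prod.Lex.toLex_lt_toLex] using List.pairwise_lt_finRange n
  · simp only [List.mem_map] at hx hy
    obtain ⟨j, -, rfl⟩ := hx
    obtain ⟨k, -, rfl⟩ := hy
    exact Prod.Lex.toLex_lt_toLex.2 (Or.inl hi)

theorem mem_descIdx (p : Fin n × Fin n) : p ∈ descIdx n := by
  simp [descIdx]

def monWord (γ : Fin n × Fin n → ℕ) : List (Fin n × Fin n) :=
  (descIdx n).flatMap fun p => List.replicate (γ p) p

theorem monWord_isDescending (γ : Fin n × Fin n → ℕ) : IsDescending (monWord γ) := by
  rw [IsDescending, monWord, List.pairwise_flatMap]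
  refine ⟨fun p _ => List.pairwise_replicate.2 (Or.inr le_rfl), descIdx_pairwise.imp ?_⟩
  intro a c h x hx y hy
  rw [List.eq_of_mem_replicate hx, List.eq_of_mem_replicate hy]
  exact h.le

theorem wordExp_monWord (γ : Fin n × Fin n → ℕ) : wordExp (monWord γ) = γ := by
  ext p
  have hnodup : (descIdx n).Nodup := descIdx_pairwise.imp fun h e => h.ne (by rw [e])
  rw [wordExp, monWord, List.count_flatMap, List.sum_map_eq_nsmul_single p]
  -- `sum_map_eq_nsmul_single` counts with the `BEq` instance derived from `DecidableEq`
  · rw [@List.count_eq_one_of_mem _ instBEqOfDecidableEq _ _ _ hnodup (mem_descIdx p)]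
    simp
  · intro a ha _
    simp [List.count_replicate, ha]

theorem IsDescending.eq_monWord {w : List (Fin n × Fin n)} (hw : IsDescending w) :
    w = monWord (wordExp w) := by
  refine List.Perm.eq_of_pairwise (fun a c _ _ h h' => toLex.injective (le_antisymm h' h)) hw
    (monWord_isDescending _) (List.perm_iff_count.2 fun p => ?_)
  exact (congrFun (wordExp_monWord (wordExp w)) p).symm

end Words

section Algebra

variable (K : Type*) [Field K] (q : K)

noncomputable def wordProd (w : List (Fin n × Fin n)) : QuantumMatrix K q n :=
  (w.map fun p => Zgen K q n p.1 p.2).prod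

@[simp]
theorem wordProd_nil : wordProd K q ([] : List (Fin n × Fin n)) = 1 := rfl

@[simp]
theorem wordProd_cons (a : Fin n × Fin n) (w : List (Fin n × Fin n)) :
    wordProd K q (a :: w) = Zgen K q n a.1 a.2 * wordProd K q w := by
  simp [wordProd]

@[simp]
theorem wordProd_append (u v : List (Fin n × Fin n)) :
    wordProd K q (u ++ v) = wordProd K q u * wordProd K q v := by
  simp [wordProd]

theorem zmon_eq_wordProd_monWord (γ : Fin n × Fin n → ℕ) :
    zmon K q γ = wordProd K q (monWord γ) := by
  simp [zmon, wordProd, monWord, descIdx, List.flatMap_def, List.prod_flatten,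
    Function.comp_def]

variable {K q}

theorem zgen_mul_zgen_same_row_of_lt {i j k : Fin n} (h : j < k) :
    Zgen K q n i j * Zgen K q n i k = q • (Zgen K q n i k * Zgen K q n i j) := by
  simpa [Zgen] using RingQuot.mkAlgHom_rel K (QMRel.r1 (q := q) i j k h)

theorem zgen_mul_zgen_same_col_of_lt {i j k : Fin n} (h : i < k) :
    Zgen K q n i j * Zgen K q n k j = q • (Zgen K q n k j * Zgen K q n i j) := by
  simpa [Zgen] using RingQuot.mkAlgHom_rel K (QMRel.r2 (q := q) i j k h)

theorem zgen_mul_zgen_of_lt_of_gt {i j s t : Fin n} (h₁ : i < s) (h₂ : t < j) :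
    Zgen K q n i j * Zgen K q n s t = Zgen K q n s t * Zgen K q n i j := by
  simpa [Zgen] using RingQuot.mkAlgHom_rel K (QMRel.r3 (q := q) i j s t h₁ h₂)

theorem zgen_mul_zgen_of_lt_of_lt {i j s t : Fin n} (h₁ : i < s) (h₂ : j < t) :
    Zgen K q n i j * Zgen K q n s t =
      Zgen K q n s t * Zgen K q n i j + (q - q⁻¹) • (Zgen K q n i t * Zgen K q n s j) := by
  simpa [Zgen] using RingQuot.mkAlgHom_rel K (QMRel.r4 (q := q) i j s t h₁ h₂)

/-- `mu = 0` except for R4, whose correction term `z_{sj} z_{it}` lies below `z_{ij}`. -/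
theorem exists_zgen_mul_zgen_eq (hq : q ≠ 0) {p r : Fin n × Fin n} (h : toLex p < toLex r) :
    ∃ lam : K, lam ≠ 0 ∧ ∃ (mu : K) (a c : Fin n × Fin n),
      Zgen K q n p.1 p.2 * Zgen K q n r.1 r.2 =
        lam • (Zgen K q n r.1 r.2 * Zgen K q n p.1 p.2) +
          mu • (Zgen K q n a.1 a.2 * Zgen K q n c.1 c.2) ∧
      toLex a < toLex r ∧ toLex c < toLex r := by
  obtain ⟨s, t⟩ := p
  obtain ⟨i, j⟩ := r
  rcases Prod.Lex.toLex_lt_toLex.1 h with hsi | ⟨rfl, htj⟩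
  · rcases lt_trichotomy t j with htj | rfl | hjt
    · refine ⟨1, one_ne_zero, q - q⁻¹, (s, j), (i, t), ?_, ?_, ?_⟩
      · simpa using zgen_mul_zgen_of_lt_of_lt hsi htj
      · exact Prod.Lex.toLex_lt_toLex.2 (Or.inl hsi)
      · exact Prod.Lex.toLex_lt_toLex.2 (Or.inr ⟨rfl, htj⟩)
    · exact ⟨q, hq, 0, _, _, by simpa using zgen_mul_zgen_same_col_of_lt hsi, h, h⟩
    · exact ⟨1, one_ne_zero, 0, _, _, by simpa using zgen_mul_zgen_of_lt_of_gt hsi hjt, h, h⟩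
  · exact ⟨q, hq, 0, _, _, by simpa using zgen_mul_zgen_same_row_of_lt htj, h, h⟩

theorem exists_wordProd_swap (hq : q ≠ 0) (u v : List (Fin n × Fin n)) {p r : Fin n × Fin n}
    (h : toLex p < toLex r) :
    ∃ lam : K, lam ≠ 0 ∧ ∃ (mu : K) (w : List (Fin n × Fin n)),
      wordProd K q (u ++ p :: r :: v) =
        lam • wordProd K q (u ++ r :: p :: v) + mu • wordProd K q w ∧
      expLt (wordExp w) (wordExp (u ++ p :: r :: v)) := by
  obtain ⟨lam, hlam, mu, a, c, heq, ha, hc⟩ := exists_zgen_mul_zgen_eq hq h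
  refine ⟨lam, hlam, mu, u ++ a :: c :: v, ?_, ?_⟩
  · simp only [wordProd_append, wordProd_cons, ← mul_assoc _ (Zgen K q n r.1 r.2), heq]
    simp only [add_mul, mul_add, smul_mul_assoc, mul_smul_comm, mul_assoc]
  · have := ((expLt_single_add_single ha hc h).add_right (wordExp v)).add_left (wordExp u)
    simpa only [wordExp_append, wordExp_cons, add_assoc, add_comm (Pi.single r 1),
      add_left_comm] using this

end Algebra

section PBW

variable {K : Type*} [Field K] {q : K}
  {b : Module.Basis (Fin n × Fin n → ℕ) K (QuantumMatrix K q n)}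

theorem isLeadExpWrt_wordProd (hq : q ≠ 0) (hb : ∀ α, b α = zmon K q α)
    (w : List (Fin n × Fin n)) : IsLeadExpWrt expLt b (wordProd K q w) (wordExp w) := by
  have wf : WellFounded (InvImage (Prod.Lex expLt (· < ·))
      fun w : List (Fin n × Fin n) => (wordExp w, inversions w)) :=
    InvImage.wf _ (IsWellFounded.wf.prod_lex wellFounded_lt)
  induction w using wf.induction with
  | _ w ih =>
  by_cases hw : IsDescending w
  · rw [hw.eq_monWord, ← zmon_eq_wordProd_monWord, ← hb, wordExp_monWord]
    exact isLeadExpWrt_basis _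
  obtain ⟨u, v, p, r, rfl, hpr⟩ := exists_adjacent_lt_of_not_isDescending hw
  obtain ⟨lam, hlam, mu, w', hprod, hlt⟩ := exists_wordProd_swap hq u v hpr
  have ih₁ := ih (u ++ r :: p :: v)
    (by rw [InvImage, wordExp_swap]; exact Prod.Lex.right _ (inversions_swap_lt u v hpr))
  have ih₂ := ih w' (Prod.Lex.left _ _ hlt)
  rw [hprod, wordExp_swap]
  rw [wordExp_swap] at hlt
  exact (ih₁.smul hlam).add_smul ih₂ hlt mu

theorem isLeadExpWrt_zmon_mul_zmon_mul_zmon (hq : q ≠ 0) (hb : ∀ α, b α = zmon K q α)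
    (α β η : Fin n × Fin n → ℕ) :
    IsLeadExpWrt expLt b (zmon K q α * zmon K q β * zmon K q η) (α + β + η) := by
  simpa [zmon_eq_wordProd_monWord, wordExp_append, wordExp_monWord, mul_assoc, add_assoc] using
    isLeadExpWrt_wordProd hq hb (monWord α ++ monWord β ++ monWord η)

theorem isLeadExpWrt_zgen_mul_zgen (hq : q ≠ 0) (hb : ∀ α, b α = zmon K q α)
    (a c : Fin n × Fin n) :
    IsLeadExpWrt expLt b (Zgen K q n a.1 a.2 * Zgen K q n c.1 c.2)
      (Pi.single a 1 + Pi.single c 1) := by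
  simpa [wordExp_cons, wordExp_nil] using isLeadExpWrt_wordProd hq hb [a, c]

end PBW

end QuantumMatrix

open QuantumMatrix

theorem quantumMatrix_solvable_general (K : Type*) [Field K]
    (q : K) (hq : q ≠ 0) (n : ℕ)
    (b : Module.Basis (Fin n × Fin n → ℕ) K (QuantumMatrix K q n))
    (hb : ∀ α, b α = zmon K q α) :
    ∃ lt : (Fin n × Fin n → ℕ) → (Fin n × Fin n → ℕ) → Prop,
      IsWellOrder (Fin n × Fin n → ℕ) lt ∧
      (∀ α β η γ : Fin n × Fin n → ℕ, γ ≠ 0 → β ≠ γ →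
        IsLeadExpWrt lt b (zmon K q α * zmon K q β * zmon K q η) γ → lt β γ) ∧
      (∀ α β γ η γ₁ γ₂ : Fin n × Fin n → ℕ, lt α β →
        IsLeadExpWrt lt b (zmon K q γ * zmon K q α * zmon K q η) γ₁ →
        IsLeadExpWrt lt b (zmon K q γ * zmon K q β * zmon K q η) γ₂ →
        lt γ₁ γ₂) ∧
      (∀ s t i j : Fin n, idxLt (s, t) (i, j) →
        ∃ (lam : K) (f : QuantumMatrix K q n), lam ≠ 0 ∧
          Zgen K q n s t * Zgen K q n i j
            = lam • (Zgen K q n i j * Zgen K q n s t) + f ∧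
          (f = 0 ∨ ∀ γ, b.repr f γ ≠ 0 → lt γ (eps i j + eps s t))) := by
  have lead := isLeadExpWrt_zmon_mul_zmon_mul_zmon hq hb
  refine ⟨expLt, inferInstance, ?_, ?_, ?_⟩
  · intro α β η γ _ hβγ h
    rw [h.unique (lead α β η)] at hβγ ⊢
    exact expLt_of_lt (lt_of_le_of_ne (le_add_self.trans le_self_add) hβγ)
  · intro α β γ η γ₁ γ₂ hαβ h₁ h₂
    rw [h₁.unique (lead γ α η), h₂.unique (lead γ β η)]
    exact (hαβ.add_left γ).add_right η
  · intro s t i j h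
    obtain ⟨lam, hlam, mu, a, c, heq, ha, hc⟩ :=
      exists_zgen_mul_zgen_eq hq (idxLt_iff_toLex_lt.1 h)
    refine ⟨lam, mu • (Zgen K q n a.1 a.2 * Zgen K q n c.1 c.2), hlam, heq,
      Or.inr fun γ hγ => ?_⟩
    rw [eps_eq_single, eps_eq_single]
    exact (isLeadExpWrt_zgen_mul_zgen hq hb a c).lt_of_repr_ne_zero
      (expLt_single_add_single ha hc (idxLt_iff_toLex_lt.1 h))
      (right_ne_zero_of_mul (by simpa using hγ))

/-- Theorem 2.3: `M_q(n)` is a solvable polynomial algebra: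
there is a total well-order `≺` on `ℕ^{I(n)}` (namely the lexicographic
order) which is a monomial ordering on the PBW basis (conditions (2) and
(3)), and with respect to which the products of generators taken in the
wrong order rewrite as `z_{st} z_{ij} = λ z_{ij} z_{st} + f` with `λ ≠ 0`
and `LE(f) ≺ ε_{ij} + ε_{st}` (or `f = 0`). -/
theorem quantumMatrix_solvable (K : Type*) [Field K] [CharZero K]
    (q : K) (hq : q ≠ 0) (n : ℕ) (hn : 2 ≤ n)
    (b : Module.Basis (Fin n × Fin n → ℕ) K (QuantumMatrix K q n))
    (hb : ∀ α, b α = zmon K q α) :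
    ∃ lt : (Fin n × Fin n → ℕ) → (Fin n × Fin n → ℕ) → Prop,
      IsWellOrder (Fin n × Fin n → ℕ) lt ∧
      (∀ α β η γ : Fin n × Fin n → ℕ, γ ≠ 0 → β ≠ γ →
        IsLeadExpWrt lt b (zmon K q α * zmon K q β * zmon K q η) γ → lt β γ) ∧
      (∀ α β γ η γ₁ γ₂ : Fin n × Fin n → ℕ, lt α β →
        IsLeadExpWrt lt b (zmon K q γ * zmon K q α * zmon K q η) γ₁ →
        IsLeadExpWrt lt b (zmon K q γ * zmon K q β * zmon K q η) γ₂ →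
        lt γ₁ γ₂) ∧
      (∀ s t i j : Fin n, idxLt (s, t) (i, j) →
        ∃ (lam : K) (f : QuantumMatrix K q n), lam ≠ 0 ∧
          Zgen K q n s t * Zgen K q n i j
            = lam • (Zgen K q n i j * Zgen K q n s t) + f ∧
          (f = 0 ∨ ∀ γ, b.repr f γ ≠ 0 → lt γ (eps i j + eps s t))) :=
  quantumMatrix_solvable_general K q hq n b hb
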